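/- Let H be a graph on k vertices and let S ⊆ V(H) be an independent set of size r with 2 ≤ r < k such that removing S disconnects H (S is separating). Then for every integer m ≥ 1 there exists a simple graph G on exactly 2m + (r − 2) + m²·(k − r) vertices such that: (a) G is (k − 1)-degenerate; (b) G contains m² pairwise edge-disjoint copies of H; and consequently (c) at least m² edges must be deleted from G to make it H-free. -/

import Mathlib

open Finset SimpleGraph
open scoped Classical

/-- `f : A → V` realizes a copy of `H` in `G`: it is injective and maps edges of `H`
to edges of `G`.  The copy itself is the subgraph of `G` whose edge set is the image
of the edge set of `H`. -/
def IsCopy {A V : Type*} (H : SimpleGraph A) (G : SimpleGraph V) (f : A → V) : Prop :=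
  Function.Injective f ∧ ∀ a b : A, H.Adj a b → G.Adj (f a) (f b)

/-- `G` contains a copy of `H` (a subgraph isomorphic to `H`). -/
def ContainsCopy {A V : Type*} (H : SimpleGraph A) (G : SimpleGraph V) : Prop :=
  ∃ f : A → V, IsCopy H G f

/-- The edge set of the copy of `H` in `G` realized by `f`. -/
noncomputable def copyEdges {A V : Type*} [Fintype A] [DecidableEq V]
    (H : SimpleGraph A) (f : A → V) : Finset (Sym2 V) :=
  H.edgeFinset.image (Sym2.map f)

/-- `𝒞` is a collection of pairwise edge-disjoint copies of `H` in `G`. -/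
def EdgeDisjointCopies {A V : Type*} [Fintype A] [DecidableEq V]
    (H : SimpleGraph A) (G : SimpleGraph V) (𝒞 : Finset (A → V)) : Prop :=
  (∀ f ∈ 𝒞, IsCopy H G f) ∧
    ∀ f ∈ 𝒞, ∀ g ∈ 𝒞, f ≠ g → Disjoint (copyEdges H f) (copyEdges H g)

/-- `G` is `p`-degenerate: every nonempty finite vertex set `U` contains a vertex with
at most `p` neighbours inside `U`. -/
def Degenerate {V : Type*} (G : SimpleGraph V) (p : ℕ) : Prop :=
  ∀ U : Finset V, U.Nonempty → ∃ v ∈ U, (U.filter fun u => G.Adj v u).card ≤ p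

/-- `G` is `c`-far (in absolute number of edges) from being `H`-free: deleting any set
of at most `c` edges from `G` leaves a graph that contains a copy of `H`. -/
def FarFromFree {A V : Type*} (H : SimpleGraph A) (G : SimpleGraph V) (c : ℝ) : Prop :=
  ∀ D : Finset (Sym2 V), (D.card : ℝ) ≤ c → ContainsCopy H (G.deleteEdges ↑D)

/-- The number of members of the collection `𝒦` whose copy contains the vertex `v`. -/
noncomputable def collDeg {A V : Type*} (𝒦 : Finset (A → V)) (v : V) : ℕ :=
  (𝒦.filter fun φ => v ∈ Set.range φ).card

/-! Copy `(i, j)` of `H` sends the roles `s₁, s₂ ∈ S` to the hubs `i` and `j`, the other roles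
in `S` to shared fixed vertices, and every role outside `S` to a vertex of its own. As `S` is
independent, every edge of a copy has such a private endpoint. Hence distinct copies are
edge-disjoint, so deleting fewer edges than there are copies misses one of them; and the private
vertices form a vertex cover whose members have degree at most `deg_H < k`, which gives
`(k - 1)`-degeneracy. -/

namespace SimpleGraph

variable {A V : Type*}

lemma mk_mem_copyEdges [Fintype A] [DecidableEq V] {H : SimpleGraph A} (f : A → V)
    {a b : A} (hab : H.Adj a b) : s(f a, f b) ∈ copyEdges H f :=
  Finset.mem_image.mpr ⟨s(a, b), by simpa using hab, rfl⟩

theorem EdgeDisjointCopies.containsCopy_deleteEdges [Fintype A] [DecidableEq V]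
    {H : SimpleGraph A} {G : SimpleGraph V} {𝒞 : Finset (A → V)}
    (h𝒞 : EdgeDisjointCopies H G 𝒞) {D : Finset (Sym2 V)} (hD : D.card < 𝒞.card) :
    ContainsCopy H (G.deleteEdges ↑D) := by
  obtain ⟨f, hf, hfD⟩ : ∃ f ∈ 𝒞, Disjoint (copyEdges H f) D := by
    by_contra! hmeet
    refine hD.not_ge (Finset.card_le_card_of_forall_subsingleton
      (fun f d => d ∈ copyEdges H f) (fun f hf => ?_) fun d _ f hf g hg => ?_)
    · obtain ⟨d, hdf, hdD⟩ := Finset.not_disjoint_iff.mp (hmeet f hf)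
      exact ⟨d, hdD, hdf⟩
    · by_contra hfg
      exact Finset.disjoint_left.mp (h𝒞.2 f hf.1 g hg.1 hfg) hf.2 hg.2
  refine ⟨f, (h𝒞.1 f hf).1, fun a b hab => ⟨(h𝒞.1 f hf).2 a b hab, fun hmem => ?_⟩⟩
  exact Finset.disjoint_left.mp hfD (mk_mem_copyEdges f hab) hmem.1

theorem degenerate_of_isVertexCover [Fintype V] {G : SimpleGraph V} {P : Set V} {d : ℕ}
    (hP : G.IsVertexCover P) (hdeg : ∀ v ∈ P, G.degree v ≤ d) : Degenerate G d := by
  intro U ⟨u, hu⟩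
  by_cases hUP : ∃ v ∈ U, v ∈ P
  · obtain ⟨v, hvU, hvP⟩ := hUP
    refine ⟨v, hvU, le_trans (Finset.card_le_card fun w hw => ?_) (hdeg v hvP)⟩
    simpa using (Finset.mem_filter.mp hw).2
  · have hisolated : ∀ w ∈ U, ¬ G.Adj u w := fun w hw hadj =>
      (hP hadj).elim (fun h => hUP ⟨u, hu, h⟩) fun h => hUP ⟨w, hw, h⟩
    exact ⟨u, hu, by simp [Finset.filter_false_of_mem hisolated]⟩

lemma exists_mem_not_mem_of_isIndepSet {H : SimpleGraph A} {S : Set A} (hS : H.IsIndepSet S)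
    {e : Sym2 A} (he : e ∈ H.edgeSet) : ∃ x ∈ e, x ∉ S := by
  induction e using Sym2.ind with | _ a b => ?_
  by_contra! hab
  exact hS (hab a (Sym2.mem_mk_left a b)) (hab b (Sym2.mem_mk_right a b)) he.ne he

end SimpleGraph

open SimpleGraph

def PrivateOutside {ι A V : Type*} (F : ι → A → V) (S : Set A) : Prop :=
  ∀ p q a b, a ∉ S → F p a = F q b → p = q

namespace PrivateOutside

variable {ι A V : Type*} {S : Set A}

lemma injective {F : ι → A → V} (hF : PrivateOutside F S) {a : A} (ha : a ∉ S) :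
    Function.Injective F :=
  fun p q h => hF p q a a ha (congrFun h a)

variable {H : SimpleGraph A} {F : ι → A ↪ V}

lemma isVertexCover (hS : H.IsIndepSet S) :
    (⨆ p, H.map (F p)).IsVertexCover {v | ∃ p, ∃ a ∉ S, F p a = v} := by
  intro u v huv
  obtain ⟨p, a, b, hab, rfl, rfl⟩ := by simpa using huv
  by_cases ha : a ∈ S
  · exact Or.inr ⟨p, b, fun hb => hS ha hb hab.ne hab, rfl⟩
  · exact Or.inl ⟨p, a, ha, rfl⟩

lemma degree_le [Fintype A] [Fintype V] (hF : PrivateOutside (fun p => ⇑(F p)) S)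
    (p : ι) {a : A} (ha : a ∉ S) : (⨆ p, H.map (F p)).degree (F p a) ≤ H.degree a := by
  rw [← card_neighborFinset_eq_degree, ← card_neighborFinset_eq_degree]
  refine (Finset.card_le_card fun w hw => ?_).trans_eq (Finset.card_map (F p))
  obtain ⟨q, x, y, hxy, hx, rfl⟩ := by simpa using hw
  obtain rfl := hF p q a x ha hx.symm
  obtain rfl := (F p).injective hx
  exact Finset.mem_map_of_mem _ (by simpa using hxy)

theorem degenerate [Fintype A] [Fintype V] (hF : PrivateOutside (fun p => ⇑(F p)) S)
    (hS : H.IsIndepSet S) : Degenerate (⨆ p, H.map (F p)) (Fintype.card A - 1) := by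
  refine degenerate_of_isVertexCover (isVertexCover hS) ?_
  rintro _ ⟨p, a, ha, rfl⟩
  exact (hF.degree_le p ha).trans (Nat.le_sub_one_of_lt (H.degree_lt_card_verts a))

lemma disjoint_copyEdges [Fintype A] [DecidableEq V]
    (hF : PrivateOutside (fun p => ⇑(F p)) S) (hS : H.IsIndepSet S) {p q : ι} (hpq : p ≠ q) :
    Disjoint (copyEdges H (F p)) (copyEdges H (F q)) := by
  refine Finset.disjoint_left.mpr fun d hdp hdq => hpq ?_
  obtain ⟨e, he, rfl⟩ := Finset.mem_image.mp hdp
  obtain ⟨e', -, he'⟩ := Finset.mem_image.mp hdq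
  obtain ⟨x, hxe, hx⟩ := exists_mem_not_mem_of_isIndepSet hS (mem_edgeFinset.mp he)
  obtain ⟨y, -, hy⟩ := Sym2.mem_map.mp (he' ▸ Sym2.mem_map.mpr ⟨x, hxe, rfl⟩)
  exact hF p q x y hx hy.symm

theorem edgeDisjointCopies [Fintype ι] [Fintype A] [DecidableEq V]
    (hF : PrivateOutside (fun p => ⇑(F p)) S) (hS : H.IsIndepSet S) :
    EdgeDisjointCopies H (⨆ p, H.map (F p)) (Finset.univ.image fun p => ⇑(F p)) := by
  refine ⟨?_, ?_⟩
  · rintro _ hf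
    obtain ⟨p, -, rfl⟩ := Finset.mem_image.mp hf
    exact ⟨(F p).injective, fun a b hab => (iSup_adj).mpr ⟨p, by simpa using hab⟩⟩
  · rintro _ hf _ hg hfg
    obtain ⟨p, -, rfl⟩ := Finset.mem_image.mp hf
    obtain ⟨q, -, rfl⟩ := Finset.mem_image.mp hg
    exact hF.disjoint_copyEdges hS fun hpq => hfg (hpq ▸ rfl)

end PrivateOutside

section HubConstruction

variable {A : Type*} [DecidableEq A] (m : ℕ) (S : Finset A) (s₁ s₂ : A)

/-- Vertices of the construction: two sets of `m` hubs, the fixed vertices for the roles in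
`S \ {s₁, s₂}`, and one private vertex for every pair of hubs and role outside `S`. -/
abbrev HubVertex : Type _ :=
  Fin m ⊕ Fin m ⊕ (S.erase s₁).erase s₂ ⊕ (Fin m × Fin m) × {a // a ∉ S}

def hubCopy (p : Fin m × Fin m) (a : A) : HubVertex m S s₁ s₂ :=
  if h : a ∈ S then
    if h₁ : a = s₁ then .inl p.1
    else if h₂ : a = s₂ then .inr (.inl p.2)
    else .inr (.inr (.inl ⟨a, Finset.mem_erase.mpr ⟨h₂, Finset.mem_erase.mpr ⟨h₁, h⟩⟩⟩))
  else .inr (.inr (.inr (p, ⟨a, h⟩)))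

lemma hubCopy_injective (p : Fin m × Fin m) : Function.Injective (hubCopy m S s₁ s₂ p) := by
  intro a b hab
  unfold hubCopy at hab
  split_ifs at hab <;> simp_all

lemma privateOutside_hubCopy : PrivateOutside (hubCopy m S s₁ s₂) ↑S := by
  intro p q a b ha hab
  unfold hubCopy at hab
  split_ifs at hab <;> simp_all

lemma card_hubVertex [Fintype A] {k r : ℕ} (hA : Fintype.card A = k) (hS : S.card = r)
    (hs₁ : s₁ ∈ S) (hs₂ : s₂ ∈ S) (hne : s₁ ≠ s₂) :
    Fintype.card (HubVertex m S s₁ s₂) = 2 * m + (r - 2) + m ^ 2 * (k - r) := by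
  have hs₂' : s₂ ∈ S.erase s₁ := Finset.mem_erase.mpr ⟨hne.symm, hs₂⟩
  simp only [Fintype.card_sum, Fintype.card_prod, Fintype.card_fin, Fintype.card_coe,
    Fintype.card_subtype_compl, hA, hS, Finset.card_erase_of_mem hs₂',
    Finset.card_erase_of_mem hs₁]
  ring_nf
  omega

end HubConstruction

theorem statement_13_general {A : Type*} [Fintype A] [DecidableEq A]
    (k r m : ℕ) (hr2 : 2 ≤ r) (hrk : r < k)
    (H : SimpleGraph A) (hA : Fintype.card A = k)
    (S : Finset A) (hS : S.card = r)
    (hind : ∀ a ∈ S, ∀ b ∈ S, ¬ H.Adj a b) :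
    ∃ G : SimpleGraph (Fin (2 * m + (r - 2) + m ^ 2 * (k - r))),
      Degenerate G (k - 1) ∧
      (∃ 𝒞 : Finset (A → Fin (2 * m + (r - 2) + m ^ 2 * (k - r))),
        EdgeDisjointCopies H G 𝒞 ∧ m ^ 2 ≤ 𝒞.card) ∧
      (∀ D : Finset (Sym2 (Fin (2 * m + (r - 2) + m ^ 2 * (k - r)))), D.card < m ^ 2 →
        ContainsCopy H (G.deleteEdges ↑D)) := by
  obtain ⟨s₁, hs₁, s₂, hs₂, hne⟩ := Finset.one_lt_card.mp (by omega : 1 < S.card)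
  obtain ⟨a₀, ha₀⟩ : ∃ a, a ∉ S := by
    by_contra! hall
    have : S = Finset.univ := Finset.eq_univ_iff_forall.mpr hall
    rw [this, Finset.card_univ] at hS
    omega
  let e := Fintype.equivFinOfCardEq (card_hubVertex m S s₁ s₂ hA hS hs₁ hs₂ hne)
  let F p := (⟨hubCopy m S s₁ s₂ p, hubCopy_injective m S s₁ s₂ p⟩ : A ↪ _).trans e.toEmbedding
  have hF : PrivateOutside (fun p => ⇑(F p)) ↑S := fun p q a b ha h =>
    privateOutside_hubCopy m S s₁ s₂ p q a b ha (e.injective h)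
  have hSind : H.IsIndepSet ↑S := fun a ha b hb _ => hind a ha b hb
  have h𝒞 := hF.edgeDisjointCopies hSind
  have hcard : (Finset.univ.image fun p => ⇑(F p)).card = m ^ 2 := by
    rw [Finset.card_image_of_injective _ (hF.injective ha₀)]
    simp [sq]
  refine ⟨⨆ p, H.map (F p), hA ▸ hF.degenerate hSind, ⟨_, h𝒞, hcard.ge⟩, fun D hD => ?_⟩
  exact h𝒞.containsCopy_deleteEdges (hD.trans_eq hcard.symm)

/-- Let `H` be a graph on `k` vertices with an independent separating set
`S` of size `r` (`2 ≤ r < k`).  Then for every `m ≥ 1` there is a simple graph `G` on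
exactly `2m + (r − 2) + m²·(k − r)` vertices that is `(k − 1)`-degenerate, contains `m²`
pairwise edge-disjoint copies of `H`, and from which at least `m²` edges must be deleted to
make it `H`-free. -/
theorem statement_13 {A : Type*} [Fintype A] [DecidableEq A]
    (k r m : ℕ) (hm : 1 ≤ m) (hr2 : 2 ≤ r) (hrk : r < k)
    (H : SimpleGraph A) (hA : Fintype.card A = k)
    (S : Finset A) (hS : S.card = r)
    (hind : ∀ a ∈ S, ∀ b ∈ S, ¬ H.Adj a b)
    (hsep : ¬ (H.induce ((↑S : Set A)ᶜ)).Connected) :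
    ∃ G : SimpleGraph (Fin (2 * m + (r - 2) + m ^ 2 * (k - r))),
      Degenerate G (k - 1) ∧
      (∃ 𝒞 : Finset (A → Fin (2 * m + (r - 2) + m ^ 2 * (k - r))),
        EdgeDisjointCopies H G 𝒞 ∧ m ^ 2 ≤ 𝒞.card) ∧
      (∀ D : Finset (Sym2 (Fin (2 * m + (r - 2) + m ^ 2 * (k - r)))), D.card < m ^ 2 →
        ContainsCopy H (G.deleteEdges ↑D)) :=
  statement_13_general k r m hr2 hrk H hA S hS hind
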